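/- arXiv:1409.2381 — 2 statements merged into one kernel-verified Lean document; each statement's English description precedes it below -/
import Mathlib

section
/- Let f : ℝ → ℝ be a smooth (C^∞) function with f ≥ 0 such that for every n ∈ ℕ there exist M_n ≥ 0 and δ_n > 0 with |f(x)| ≤ M_n |x|^n for all |x| ≤ δ_n. Then the function g = √f is differentiable at 0 with g'(0) = 0. -/
theorem stmt_2 (f : ℝ → ℝ) (hf : ContDiff ℝ (⊤ : ℕ∞) f) (hnonneg : ∀ x, 0 ≤ f x)
    (hflat : ∀ n : ℕ, ∃ M : ℝ, 0 ≤ M ∧ ∃ δ : ℝ, 0 < δ ∧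
      ∀ x : ℝ, |x| ≤ δ → |f x| ≤ M * |x| ^ n) :
    HasDerivAt (fun x => Real.sqrt (f x)) 0 0 := by
  obtain ⟨M, hM, δ, hδ, hbound⟩ := hflat 4
  have hf0 : f 0 = 0 := by
    obtain ⟨M1, hM1, δ1, hδ1, h1⟩ := hflat 1
    have h := h1 0 (by simp [le_of_lt hδ1])
    simp only [abs_zero, pow_one, mul_zero] at h
    exact le_antisymm (by simpa [abs_of_nonneg (hnonneg 0)] using h) (hnonneg 0)
  rw [hasDerivAt_iff_tendsto]
  have key : ∀ᶠ x in nhds (0:ℝ),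
      ‖x - 0‖⁻¹ * ‖Real.sqrt (f x) - Real.sqrt (f 0) - (x - 0) • (0:ℝ)‖
        ≤ Real.sqrt M * |x| := by
    filter_upwards [Metric.ball_mem_nhds 0 hδ] with x hx
    have hx' : |x| ≤ δ := le_of_lt (by simpa [Real.dist_eq] using hx)
    have h1 : f x ≤ M * x ^ 4 := by
      have h := hbound x hx'
      have : |x| ^ 4 = x ^ 4 := by
        rw [← abs_pow, abs_of_nonneg (by positivity)]
      calc f x = |f x| := (abs_of_nonneg (hnonneg x)).symm
        _ ≤ M * |x| ^ 4 := h
        _ = M * x ^ 4 := by rw [this]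
    have h2 : Real.sqrt (f x) ≤ Real.sqrt M * x ^ 2 := by
      have : Real.sqrt (f x) ≤ Real.sqrt (M * x ^ 4) := Real.sqrt_le_sqrt h1
      calc Real.sqrt (f x) ≤ Real.sqrt (M * x ^ 4) := this
        _ = Real.sqrt M * Real.sqrt (x ^ 4) := Real.sqrt_mul hM _
        _ = Real.sqrt M * x ^ 2 := by
            congr 1
            rw [show x ^ 4 = (x ^ 2) ^ 2 by ring, Real.sqrt_sq (by positivity)]
    simp only [sub_zero, smul_zero, hf0, Real.sqrt_zero, Real.norm_eq_abs,
      abs_of_nonneg (Real.sqrt_nonneg (f x))]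
    rcases eq_or_ne x 0 with rfl | hxne
    · simp
    · have hxpos : (0:ℝ) < |x| := abs_pos.mpr hxne
      rw [inv_mul_le_iff₀ hxpos]
      calc Real.sqrt (f x) ≤ Real.sqrt M * x ^ 2 := h2
        _ = |x| * (Real.sqrt M * |x|) := by rw [← sq_abs x]; ring
  have hnn : ∀ᶠ x in nhds (0:ℝ), 0 ≤
      ‖x - 0‖⁻¹ * ‖Real.sqrt (f x) - Real.sqrt (f 0) - (x - 0) • (0:ℝ)‖ :=
    Filter.Eventually.of_forall fun x => by positivity
  have hlim : Filter.Tendsto (fun x : ℝ => Real.sqrt M * |x|) (nhds 0) (nhds 0) := by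
    have : Filter.Tendsto (fun x : ℝ => |x|) (nhds 0) (nhds 0) := by
      simpa using continuous_abs.tendsto (0:ℝ)
    simpa using this.const_mul (Real.sqrt M)
  exact squeeze_zero' hnn key hlim
end

section
/- Let f : ℝ → ℝ be smooth, nonnegative, with f(x) = 0 for x ≤ 0. If f vanishes to infinite order at 0 (for every n there exist M_n, δ_n > 0 with f(x) ≤ M_n x^n for 0 ≤ x ≤ δ_n), then √f is continuously differentiable at 0 with derivative 0. -/
/-- A continuous-at-0 function vanishing on negatives vanishes at 0. -/
lemma aux_left_limit_zero (h : ℝ → ℝ) (hc : ContinuousAt h 0)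
    (h0 : ∀ x < (0 : ℝ), h x = 0) : h 0 = 0 := by
  have h1 : Filter.Tendsto h (nhdsWithin (0 : ℝ) (Set.Iio 0)) (nhds (h 0)) :=
    hc.continuousWithinAt.tendsto
  have h2 : Filter.Tendsto h (nhdsWithin (0 : ℝ) (Set.Iio 0)) (nhds 0) := by
    apply Filter.Tendsto.congr' _ tendsto_const_nhds
    filter_upwards [self_mem_nhdsWithin] with x hx
    exact (h0 x hx).symm
  exact tendsto_nhds_unique h1 h2

/-- Landau-type inequality: if `f` is nonnegative, smooth, with second derivative
bounded above by `C` on `[x - T, x + T]` and `|f'(x)| ≤ C T`, then `f'(x)^2 ≤ 2 C f(x)`. -/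
lemma aux_landau (f : ℝ → ℝ) (hdf : Differentiable ℝ f) (hdf1 : Differentiable ℝ (deriv f))
    {C x T : ℝ} (hC : 0 < C)
    (hT : |deriv f x| ≤ C * T)
    (h2 : ∀ y ∈ Set.Icc (x - T) (x + T), deriv (deriv f) y ≤ C)
    (hnn : ∀ y, 0 ≤ f y) :
    (deriv f x) ^ 2 ≤ 2 * C * f x := by
  set p := deriv f x with hp
  set t := -p / C with htdef
  have hT0 : 0 ≤ T := by nlinarith [abs_nonneg p]
  have ht : |t| ≤ T := by
    rw [htdef, abs_div, abs_neg, abs_of_pos hC, div_le_iff₀ hC]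
    linarith [hT]
  have htlo : -T ≤ t := (abs_le.mp ht).1
  have hthi : t ≤ T := (abs_le.mp ht).2
  set φd : ℝ → ℝ := fun y => deriv f y - p - C * (y - x) with hφddef
  set φ : ℝ → ℝ := fun y => f y - f x - p * (y - x) - C / 2 * (y - x) ^ 2 with hφdef
  have hφd : ∀ y, HasDerivAt φd (deriv (deriv f) y - C) y := by
    intro y
    have h1 : HasDerivAt (fun y => deriv f y - p) (deriv (deriv f) y) y :=
      (hdf1 y).hasDerivAt.sub_const p
    have h2' : HasDerivAt (fun y : ℝ => C * (y - x)) (C * 1) y :=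
      ((hasDerivAt_id y).sub_const x).const_mul C
    have := h1.sub h2'
    rw [mul_one] at this
    exact this
  have hφ : ∀ y, HasDerivAt φ (φd y) y := by
    intro y
    have h1 : HasDerivAt (fun y => f y - f x) (deriv f y) y := (hdf y).hasDerivAt.sub_const (f x)
    have h2' : HasDerivAt (fun y : ℝ => p * (y - x)) (p * 1) y :=
      ((hasDerivAt_id y).sub_const x).const_mul p
    have h3 : HasDerivAt (fun y : ℝ => C / 2 * (y - x) ^ 2)
        (C / 2 * (2 * (y - x) ^ 1 * 1)) y :=
      (((hasDerivAt_id y).sub_const x).pow 2).const_mul (C / 2)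
    have := (h1.sub h2').sub h3
    refine this.congr_deriv ?_
    simp [hφddef]; ring
  have hφdcont : Continuous φd := by
    rw [continuous_iff_continuousAt]
    exact fun y => (hφd y).differentiableAt.continuousAt
  have hφcont : Continuous φ := by
    rw [continuous_iff_continuousAt]
    exact fun y => (hφ y).differentiableAt.continuousAt
  have hanti : AntitoneOn φd (Set.Icc (x - T) (x + T)) := by
    apply antitoneOn_of_deriv_nonpos (convex_Icc _ _) hφdcont.continuousOn
    · exact fun y _ => ((hφd y).differentiableAt).differentiableWithinAt
    · intro y hy
      rw [interior_Icc] at hy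
      rw [(hφd y).deriv]
      have := h2 y (Set.mem_Icc.mpr ⟨le_of_lt hy.1, le_of_lt hy.2⟩)
      linarith
  have hφdx : φd x = 0 := by simp [hφddef, hp]
  have hxmem : x ∈ Set.Icc (x - T) (x + T) := by
    constructor <;> linarith
  have hφx : φ x = 0 := by simp [hφdef]
  -- φ (x + t) ≤ 0
  have hxt : x + t ∈ Set.Icc (x - T) (x + T) := by
    constructor <;> linarith
  have hle : φ (x + t) ≤ 0 := by
    rcases le_or_gt t 0 with hts | hts
    · -- monotone on [x - T, x]
      have hmono : MonotoneOn φ (Set.Icc (x - T) x) := by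
        apply monotoneOn_of_deriv_nonneg (convex_Icc _ _) hφcont.continuousOn
        · exact fun y _ => ((hφ y).differentiableAt).differentiableWithinAt
        · intro y hy
          rw [interior_Icc] at hy
          rw [(hφ y).deriv]
          have hymem : y ∈ Set.Icc (x - T) (x + T) := ⟨le_of_lt hy.1, by linarith [hy.2]⟩
          have := hanti hymem hxmem (le_of_lt hy.2)
          linarith [hφdx]
      have h1 : x + t ∈ Set.Icc (x - T) x := ⟨by linarith, by linarith⟩
      have h2' : x ∈ Set.Icc (x - T) x := ⟨by linarith, le_refl x⟩
      have := hmono h1 h2' (by linarith)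
      linarith [hφx]
    · -- antitone on [x, x + T]
      have hanti2 : AntitoneOn φ (Set.Icc x (x + T)) := by
        apply antitoneOn_of_deriv_nonpos (convex_Icc _ _) hφcont.continuousOn
        · exact fun y _ => ((hφ y).differentiableAt).differentiableWithinAt
        · intro y hy
          rw [interior_Icc] at hy
          rw [(hφ y).deriv]
          have hymem : y ∈ Set.Icc (x - T) (x + T) := ⟨by linarith [hy.1], le_of_lt hy.2⟩
          have := hanti hxmem hymem (le_of_lt hy.1)
          linarith [hφdx]
      have h1 : x + t ∈ Set.Icc x (x + T) := ⟨by linarith, by linarith⟩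
      have h2' : x ∈ Set.Icc x (x + T) := ⟨le_refl x, by linarith⟩
      have := hanti2 h2' h1 (by linarith)
      linarith [hφx]
  have h0 : 0 ≤ f (x + t) := hnn _
  have hexp : f (x + t) - f x - p * t - C / 2 * t ^ 2 ≤ 0 := by
    have h := hle
    simp only [hφdef, add_sub_cancel_left] at h
    exact h
  have hCne : C ≠ 0 := ne_of_gt hC
  have hpt : p * t = -(p ^ 2 / C) := by
    rw [htdef]; ring
  have ht2 : C / 2 * t ^ 2 = p ^ 2 / (2 * C) := by
    rw [htdef]; field_simp
  have hfin : p ^ 2 / (2 * C) ≤ f x := by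
    have := hexp
    rw [hpt, ht2] at this
    have hq : p ^ 2 / C = 2 * (p ^ 2 / (2 * C)) := by field_simp
    nlinarith [this, h0, hq]
  rw [div_le_iff₀ (by positivity)] at hfin
  nlinarith [hfin]

theorem stmt_3 (f : ℝ → ℝ) (hf : ContDiff ℝ (⊤ : ℕ∞) f) (hnonneg : ∀ x, 0 ≤ f x)
    (hzero : ∀ x ≤ (0 : ℝ), f x = 0)
    (hflat : ∀ n : ℕ, ∃ M : ℝ, 0 < M ∧ ∃ δ : ℝ, 0 < δ ∧
      ∀ x : ℝ, 0 ≤ x → x ≤ δ → f x ≤ M * x ^ n) :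
    HasDerivAt (fun x => Real.sqrt (f x)) 0 0 ∧
      ContinuousAt (deriv fun x => Real.sqrt (f x)) 0 := by
  set g : ℝ → ℝ := fun x => Real.sqrt (f x) with hgdef
  have hfi : ContDiff ℝ ((⊤ : ℕ∞) : WithTop ℕ∞) f := hf.of_le (by simp)
  have hdf : Differentiable ℝ f := hfi.differentiable (by simp)
  have hf1 : ContDiff ℝ ((⊤ : ℕ∞) : WithTop ℕ∞) (deriv f) := (contDiff_infty_iff_deriv.mp hfi).2
  have hdf1 : Differentiable ℝ (deriv f) := hf1.differentiable (by simp)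
  have hf2 : ContDiff ℝ ((⊤ : ℕ∞) : WithTop ℕ∞) (deriv (deriv f)) := (contDiff_infty_iff_deriv.mp hf1).2
  have hcont2 : Continuous (deriv (deriv f)) := hf2.continuous
  have hf00 : f 0 = 0 := hzero 0 le_rfl
  have hg00 : g 0 = 0 := by simp [hgdef, hf00]
  -- deriv f = 0 on negatives
  have h10 : ∀ x < (0 : ℝ), deriv f x = 0 := by
    intro x hx
    have hev : f =ᶠ[nhds x] (fun _ => (0 : ℝ)) := by
      filter_upwards [Iio_mem_nhds hx] with y hy
      exact hzero y (le_of_lt hy)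
    rw [hev.deriv_eq]
    simp
  have h20 : ∀ x < (0 : ℝ), deriv (deriv f) x = 0 := by
    intro x hx
    have hev : deriv f =ᶠ[nhds x] (fun _ => (0 : ℝ)) := by
      filter_upwards [Iio_mem_nhds hx] with y hy
      exact h10 y hy
    rw [hev.deriv_eq]
    simp
  have hf1_0 : deriv f 0 = 0 :=
    aux_left_limit_zero _ (hf1.continuous.continuousAt) h10
  have hf2_0 : deriv (deriv f) 0 = 0 :=
    aux_left_limit_zero _ (hcont2.continuousAt) h20
  -- Part 1: HasDerivAt g 0 0
  obtain ⟨M, hM, δ₀, hδ₀, hMδ⟩ := hflat 4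
  have hpart1 : HasDerivAt g 0 0 := by
    rw [hasDerivAt_iff_tendsto_slope]
    apply squeeze_zero_norm' (a := fun x => Real.sqrt M * |x|)
    · have hmem : {x : ℝ | x ≠ 0 ∧ |x| < δ₀} ∈ nhdsWithin (0 : ℝ) {(0 : ℝ)}ᶜ := by
        have h1 : Metric.ball (0 : ℝ) δ₀ ∈ nhds (0 : ℝ) := Metric.ball_mem_nhds _ hδ₀
        have := inter_mem_nhdsWithin ({(0 : ℝ)}ᶜ) h1
        apply Filter.mem_of_superset this
        intro x hx
        refine ⟨hx.1, ?_⟩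
        have := hx.2
        rwa [Metric.mem_ball, Real.dist_eq, sub_zero] at this
      filter_upwards [hmem] with x hx
      obtain ⟨hxne, hxδ⟩ := hx
      rw [slope_def_field, hg00]
      rcases le_or_gt x 0 with hxle | hxpos
      · have : g x = 0 := by simp [hgdef, hzero x hxle]
        rw [this]
        simp
        positivity
      · have hfle : f x ≤ M * x ^ 4 := hMδ x (le_of_lt hxpos)
          (by rw [abs_of_pos hxpos] at hxδ; linarith)
        have hgle : g x ≤ Real.sqrt M * x ^ 2 := by
          have h1 : g x ≤ Real.sqrt (M * x ^ 4) := Real.sqrt_le_sqrt hfle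
          have h2 : Real.sqrt (M * x ^ 4) = Real.sqrt M * x ^ 2 := by
            rw [Real.sqrt_mul (le_of_lt hM)]
            congr 1
            rw [show x ^ 4 = (x ^ 2) ^ 2 by ring, Real.sqrt_sq (by positivity)]
          rw [h2] at h1
          exact h1
        have hgnn : 0 ≤ g x := Real.sqrt_nonneg _
        have : |(g x - 0) / (x - 0)| = g x / x := by
          rw [sub_zero, sub_zero, abs_div, abs_of_nonneg hgnn, abs_of_pos hxpos]
        rw [Real.norm_eq_abs, this]
        rw [div_le_iff₀ hxpos]
        calc g x ≤ Real.sqrt M * x ^ 2 := hgle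
          _ = Real.sqrt M * |x| * x := by rw [abs_of_pos hxpos]; ring
    · have : Filter.Tendsto (fun x : ℝ => Real.sqrt M * |x|) (nhds 0) (nhds 0) := by
        have := (continuous_abs.continuousAt (x := (0 : ℝ))).const_smul (Real.sqrt M)
        simpa [ContinuousAt, abs_zero, Pi.smul_def] using this
      exact this.mono_left nhdsWithin_le_nhds
  refine ⟨hpart1, ?_⟩
  have hderivg0 : deriv g 0 = 0 := hpart1.deriv
  -- key estimate
  have key : ∀ ε : ℝ, 0 < ε → ∃ δ > 0, ∀ x : ℝ, |x| < δ → |deriv g x| ≤ ε := by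
    intro ε hε
    have hε2 : (0 : ℝ) < ε ^ 2 := by positivity
    have hc : ContinuousAt (deriv (deriv f)) 0 := hcont2.continuousAt
    rw [Metric.continuousAt_iff] at hc
    obtain ⟨δ, hδ, hδ'⟩ := hc (ε ^ 2) hε2
    refine ⟨δ / 2, by linarith, ?_⟩
    intro x hx
    rcases eq_or_lt_of_le (hnonneg x) with hfx | hfx
    · -- f x = 0 : local min of g
      have hgx : g x = 0 := by simp [hgdef, ← hfx]
      have hmin : IsLocalMin g x := by
        apply Filter.Eventually.of_forall
        intro y
        rw [hgx]
        exact Real.sqrt_nonneg _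
      rw [hmin.deriv_eq_zero]
      simpa using le_of_lt hε
    · -- f x > 0, so x > 0
      have hxpos : 0 < x := by
        by_contra h
        push_neg at h
        rw [hzero x h] at hfx
        exact absurd hfx (lt_irrefl 0)
      have hxδ : x < δ / 2 := by rw [abs_of_pos hxpos] at hx; exact hx
      -- bound on second derivative on [-δ, δ] ∩ relevant
      have hbd2 : ∀ y : ℝ, |y| < δ → deriv (deriv f) y ≤ ε ^ 2 := by
        intro y hy
        have := hδ' (by rwa [Real.dist_eq, sub_zero])
        rw [Real.dist_eq, hf2_0, sub_zero] at this
        exact le_of_lt (lt_of_le_of_lt (le_abs_self _) this)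
      -- MVT bound on deriv f x
      have hmvt : |deriv f x| ≤ ε ^ 2 * x := by
        obtain ⟨c, hc1, hc2⟩ := exists_hasDerivAt_eq_slope (deriv f) (deriv (deriv f)) hxpos
          (hdf1.continuous.continuousOn) (fun y _ => (hdf1 y).hasDerivAt)
        rw [hf1_0, sub_zero, sub_zero] at hc2
        have hcabs : |c| < δ := by
          rw [abs_of_pos hc1.1]
          linarith [hc1.2]
        have h1 : |deriv (deriv f) c| ≤ ε ^ 2 := by
          have := hδ' (x := c) (by rwa [Real.dist_eq, sub_zero])
          rw [Real.dist_eq, hf2_0, sub_zero] at this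
          exact le_of_lt this
        have : deriv f x = deriv (deriv f) c * x := by
          rw [hc2]; field_simp
        rw [this, abs_mul, abs_of_pos hxpos]
        exact mul_le_mul_of_nonneg_right h1 (le_of_lt hxpos)
      -- Landau
      have hlan : (deriv f x) ^ 2 ≤ 2 * ε ^ 2 * f x := by
        apply aux_landau f hdf hdf1 hε2 hmvt _ hnonneg
        intro y hy
        apply hbd2
        rw [abs_lt]
        constructor
        · have := hy.1; simp only [sub_self] at this; linarith
        · have := hy.2; linarith
      -- compute deriv g x
      have hs : 0 < Real.sqrt (f x) := Real.sqrt_pos.mpr hfx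
      have hder : HasDerivAt g (1 / (2 * Real.sqrt (f x)) * deriv f x) x := by
        have h1 : HasDerivAt Real.sqrt (1 / (2 * Real.sqrt (f x))) (f x) :=
          Real.hasDerivAt_sqrt (ne_of_gt hfx)
        exact h1.comp x (hdf x).hasDerivAt
      rw [hder.deriv]
      have hsq : (Real.sqrt (f x)) ^ 2 = f x := Real.sq_sqrt (le_of_lt hfx)
      rw [abs_mul, abs_div, abs_one, abs_of_pos (by positivity : (0:ℝ) < 2 * Real.sqrt (f x))]
      rw [div_mul_eq_mul_div, one_mul, div_le_iff₀ (by positivity)]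
      -- |deriv f x| ≤ ε * (2 * sqrt (f x))
      have h1 : |deriv f x| ≤ Real.sqrt (2 * ε ^ 2 * f x) := by
        rw [← Real.sqrt_sq (abs_nonneg (deriv f x))]
        apply Real.sqrt_le_sqrt
        rw [sq_abs]
        exact hlan
      have h2 : Real.sqrt (2 * ε ^ 2 * f x) ≤ ε * (2 * Real.sqrt (f x)) := by
        have hle2 : 2 * ε ^ 2 * f x ≤ (ε * (2 * Real.sqrt (f x))) ^ 2 := by
          nlinarith [hsq, hnonneg x, hε2]
        calc Real.sqrt (2 * ε ^ 2 * f x) ≤ Real.sqrt ((ε * (2 * Real.sqrt (f x))) ^ 2) :=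
              Real.sqrt_le_sqrt hle2
          _ = ε * (2 * Real.sqrt (f x)) := Real.sqrt_sq (by positivity)
      linarith
  rw [Metric.continuousAt_iff]
  intro ε hε
  obtain ⟨δ, hδ, hkey⟩ := key (ε / 2) (by linarith)
  refine ⟨δ, hδ, ?_⟩
  intro x hx
  rw [Real.dist_eq, hderivg0, sub_zero]
  rw [Real.dist_eq, sub_zero] at hx
  calc |deriv g x| ≤ ε / 2 := hkey x hx
    _ < ε := by linarith
end
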